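/- Value of the conserved quantities at n = 0: let A be a commutative ring, R : ℤ → A a family of weights with R_i = 0 for all i < 0, m ≥ 1 and g_1, …, g_m ∈ A. Then for every natural number i ≥ 1, Γ_{2i}(0) = Z_{0,−1}(2i−1). -/

import Mathlib

open Finset

variable {A : Type*} [CommRing A]

/-- End height of a walk starting at a given height, with steps given by a list of
Booleans (`true` = ascending step `+1`, `false` = descending step `-1`). -/
def walkEnd : ℤ → List Bool → ℤ
  | a, [] => a
  | a, true :: s => walkEnd (a + 1) s
  | a, false :: s => walkEnd (a - 1) s

/-- Weight of a walk: the product of `R h` over all descending steps `h → h - 1`. -/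
def walkWeight (R : ℤ → A) : ℤ → List Bool → A
  | _, [] => 1
  | a, true :: s => walkWeight R (a + 1) s
  | a, false :: s => R a * walkWeight R (a - 1) s

/-- Whether every height visited by the walk (including the first and last) is `≥ c`. -/
def walkAbove (c : ℤ) : ℤ → List Bool → Bool
  | a, [] => decide (c ≤ a)
  | a, true :: s => decide (c ≤ a) && walkAbove c (a + 1) s
  | a, false :: s => decide (c ≤ a) && walkAbove c (a - 1) s

/-- `Zw R a b k`: the generating function of walks of length `k` from height `a` to
height `b`, each walk weighted by `R h` per descending step from height `h`. -/
def Zw (R : ℤ → A) (a b : ℤ) (k : ℕ) : A :=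
  ∑ s : Fin k → Bool,
    if walkEnd a (List.ofFn s) = b then walkWeight R a (List.ofFn s) else 0

/-- `Zwp R a b k`: the same generating function, restricted to walks staying at
heights `≥ a` ("positive walks"). -/
def Zwp (R : ℤ → A) (a b : ℤ) (k : ℕ) : A :=
  ∑ s : Fin k → Bool,
    if walkEnd a (List.ofFn s) = b ∧ walkAbove a a (List.ofFn s) = true then
      walkWeight R a (List.ofFn s)
    else 0

/-- `Pdim R a b k`: hard-dimer partition function on the segment `[a,b]`: the sum over
`k`-element subsets `S` of `{a+1, …, b}` with no two consecutive elements of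
`∏ i in S, R i` (a dimer on `[i-1,i]` carries weight `R i`). -/
noncomputable def Pdim (R : ℤ → A) (a b : ℤ) (k : ℕ) : A :=
  ∑ S ∈ Finset.powersetCard k (Finset.Icc (a + 1) b),
    if ∀ i ∈ S, i + 1 ∉ S then ∏ i ∈ S, R i else 0

/-- `Vp R g m a b = Σ_{k=1}^{m} g_k • Zw R a b (2k-1)`: grand-canonical generating
function for walks of odd length from `a` to `b`. -/
def Vp (R : ℤ → A) (g : ℕ → A) (m : ℕ) (a b : ℤ) : A :=
  ∑ k ∈ Finset.Icc 1 m, g k * Zw R a b (2 * k - 1)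

/-- The conserved quantities `Γ_{2i}(n)`; `Gam R g m i n` stands for `Γ_{2i}(n)`. -/
def Gam (R : ℤ → A) (g : ℕ → A) (m : ℕ) (i : ℕ) (n : ℤ) : A :=
  if i = 0 then R (n - 1) - Vp R g m (n - 1) (n - 2) + (if n = 0 then 1 else 0)
  else
    Zwp R (n - 1) (n - 1) (2 * i) *
        (R (n - 1) - Vp R g m (n - 1) (n - 2) + (if n = 0 then 1 else 0)) -
      ∑ j ∈ Finset.Icc 1 i,
        Zwp R (n - 1) (n - 1 + 2 * (j : ℤ)) (2 * i) * Vp R g m (n + 2 * (j : ℤ) - 1) (n - 2)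

/-- The symmetric conserved quantities `Γ̃_{2i}(n)`; `Gamt R g m i n` stands
for `Γ̃_{2i}(n)`. -/
def Gamt (R : ℤ → A) (g : ℕ → A) (m : ℕ) (i : ℕ) (n : ℤ) : A :=
  if i = 0 then R n - Vp R g m n (n - 1)
  else
    (Zw R n (n - 1) (2 * i - 1) - R (n - 1) * R (n + 1) * Zw R (n - 2) (n + 1) (2 * i - 1)) *
        (R n - Vp R g m n (n - 1)) -
      ∑ j ∈ Finset.Icc 1 i,
        (Zw R (n - (j : ℤ)) (n + (j : ℤ) - 1) (2 * i - 1) -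
            R (n - (j : ℤ) - 1) * R (n + (j : ℤ) + 1) *
              Zw R (n - (j : ℤ) - 2) (n + (j : ℤ) + 1) (2 * i - 1)) *
          Vp R g m (n + (j : ℤ)) (n - (j : ℤ) - 1)

/-- The master equation: `R i = 0` for `i < 0` and `R n = 1 + V'_{n,n-1}` for `n ≥ 0`. -/
def MasterEq (R : ℤ → A) (g : ℕ → A) (m : ℕ) : Prop :=
  (∀ i : ℤ, i < 0 → R i = 0) ∧ ∀ n : ℤ, 0 ≤ n → R n = 1 + Vp R g m n (n - 1)

/-- `Zodd R a b i = Zw R a b (2i-1)`, with the convention that for `i = 0`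
(walks of length `-1`) it equals `1` if `b = a - 1` and `0` otherwise. -/
def Zodd (R : ℤ → A) (a b : ℤ) (i : ℕ) : A :=
  if i = 0 then (if b = a - 1 then 1 else 0) else Zw R a b (2 * i - 1)

/-- Binomial coefficient with an integer lower index, with the convention that it
vanishes for negative lower index. -/
def Cz (n : ℕ) (p : ℤ) : ℤ := if 0 ≤ p then n.choose p.toNat else 0

/-!
At `n = 0` every walk that reaches height `-2` from height `≥ -1` descends from `-1` and so carries
the factor `R (-1) = 0`. Hence `Γ₀(0) = 1` and every `V'_{2j-1,-2}` vanishes, leaving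
`Γ_{2i}(0) = Z⁺_{-1,-1}(2i)`. A positive walk from `-1` must begin with an up step, and the
remaining walk of length `2i - 1` from `0` to `-1` may be taken unrestricted, since leaving the
half-line `≥ -1` again costs a factor `R (-1)`.
-/

variable {R : ℤ → A}

theorem le_walkEnd_of_walkAbove {c a : ℤ} {s : List Bool} (h : walkAbove c a s = true) :
    c ≤ walkEnd a s := by
  induction s generalizing a with
  | nil => simpa [walkAbove, walkEnd] using h
  | cons b t ih => cases b <;> simp only [walkAbove, Bool.and_eq_true] at h <;> exact ih h.2

theorem walkAbove_pred_self (a : ℤ) (s : List Bool) : walkAbove a (a - 1) s = false := by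
  cases s with
  | nil => simp [walkAbove]
  | cons b t => cases b <;> simp [walkAbove]

theorem walkWeight_eq_zero_of_walkAbove_eq_false {c : ℤ} (hc : R c = 0) {a : ℤ} (ha : c ≤ a)
    {s : List Bool} (h : walkAbove c a s = false) : walkWeight R a s = 0 := by
  induction s generalizing a with
  | nil => simp [walkAbove] at h; omega
  | cons b t ih =>
    cases b <;> simp only [walkAbove, decide_eq_true ha, Bool.true_and] at h
    case true => exact ih (by omega) h
    case false =>
      rcases ha.eq_or_lt with rfl | ha'
      · simp [walkWeight, hc]
      · simp [walkWeight, ih (by omega : c ≤ a - 1) h]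

theorem Zw_eq_zero_of_lt {c : ℤ} (hc : R c = 0) {a b : ℤ} (ha : c ≤ a) (hb : b < c) (k : ℕ) :
    Zw R a b k = 0 := by
  refine sum_eq_zero fun s _ => ite_eq_right_iff.mpr fun hend => ?_
  refine walkWeight_eq_zero_of_walkAbove_eq_false hc ha ?_
  by_contra habove
  have := le_walkEnd_of_walkAbove (Bool.not_eq_false _ ▸ habove)
  omega

theorem Vp_eq_zero_of_lt {c : ℤ} (hc : R c = 0) {a b : ℤ} (ha : c ≤ a) (hb : b < c)
    (g : ℕ → A) (m : ℕ) : Vp R g m a b = 0 :=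
  sum_eq_zero fun k _ => by rw [Zw_eq_zero_of_lt hc ha hb, mul_zero]

theorem Zw_eq_sum_walkAbove {c : ℤ} (hc : R c = 0) {a : ℤ} (ha : c ≤ a) (b : ℤ) (k : ℕ) :
    Zw R a b k = ∑ s : Fin k → Bool,
      if walkEnd a (List.ofFn s) = b ∧ walkAbove c a (List.ofFn s) = true then
        walkWeight R a (List.ofFn s) else 0 := by
  refine sum_congr rfl fun s _ => ?_
  cases habove : walkAbove c a (List.ofFn s)
  · simp [walkWeight_eq_zero_of_walkAbove_eq_false hc ha habove]
  · simp

theorem sum_pi_fin_succ {M : Type*} [AddCommMonoid M] {n : ℕ} (f : (Fin (n + 1) → Bool) → M) :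
    ∑ s, f s = ∑ b : Bool, ∑ t : Fin n → Bool, f (Fin.cons b t) := by
  rw [← (Fin.consEquiv fun _ => Bool).sum_comp, Fintype.sum_prod_type]
  rfl

theorem Zwp_succ_of_eq_zero {a : ℤ} (ha : R a = 0) (b : ℤ) (k : ℕ) :
    Zwp R a b (k + 1) = Zw R (a + 1) b k := by
  rw [Zw_eq_sum_walkAbove ha (Int.le_add_one le_rfl), Zwp, sum_pi_fin_succ, Fintype.sum_bool]
  simp [List.ofFn_succ, walkAbove, walkEnd, walkWeight, walkAbove_pred_self]

theorem stmt_10_general {A : Type*} [CommRing A] (R : ℤ → A) (hR : ∀ i : ℤ, i < 0 → R i = 0)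
    (m : ℕ) (g : ℕ → A) (i : ℕ) (hi : 1 ≤ i) :
    Gam R g m i 0 = Zw R 0 (-1) (2 * i - 1) := by
  have hR₁ : R (-1) = 0 := hR (-1) (by norm_num)
  have hV : ∀ a : ℤ, -1 ≤ a → Vp R g m a (-2) = 0 := fun a ha =>
    Vp_eq_zero_of_lt hR₁ ha (by norm_num) g m
  obtain ⟨k, rfl⟩ : ∃ k, i = k + 1 := ⟨i - 1, by omega⟩
  have hZwp : Zwp R (-1) (-1) (2 * (k + 1)) = Zw R 0 (-1) (2 * (k + 1) - 1) := by
    rw [show 2 * (k + 1) = 2 * k + 1 + 1 by ring, Zwp_succ_of_eq_zero hR₁]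
    norm_num
  rw [Gam, if_neg k.succ_ne_zero]
  norm_num [hR₁, hV, hZwp]
  refine sum_eq_zero fun j hj => ?_
  rw [hV _ (by have := (mem_Icc.mp hj).1; omega), mul_zero]

/-- value of the conserved quantities at `n = 0`. -/
theorem stmt_10 {A : Type*} [CommRing A] (R : ℤ → A) (hR : ∀ i : ℤ, i < 0 → R i = 0)
    (m : ℕ) (hm : 1 ≤ m) (g : ℕ → A) (i : ℕ) (hi : 1 ≤ i) :
    Gam R g m i 0 = Zw R 0 (-1) (2 * i - 1) :=
  stmt_10_general R hR m g i hi
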